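/- If Λ : D(ℂ^D) → D(ℂ^d ⊗ ℂ^d) is an (ε,δ)-strong disentangler and Γ(ρ) = tr₂(Λ(ρ)) is the induced channel to the first output system, then: (1) for every finite-dimensional H_R and every state ρ on ℂ^D ⊗ H_R, (Γ ⊗ id_R)(ρ) is within trace distance ε of SEP(ℂ^d, H_R), and (2) min over pure ψ of max over ρ of F(ψ, Γ(ρ)) ≥ 1 − δ. -/

import Mathlib

open Matrix
open scoped Kronecker ComplexOrder

noncomputable section

variable {n : Type*} [Fintype n] [DecidableEq n]

/-- Square root of a positive semidefinite matrix (0 if not PSD). -/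
def msqrt (M : Matrix n n ℂ) : Matrix n n ℂ := by
  classical exact if h : M.PosSemidef then
    (h.1.eigenvectorUnitary : Matrix n n ℂ) *
      diagonal ((↑) ∘ Real.sqrt ∘ h.1.eigenvalues) *
      (star h.1.eigenvectorUnitary : Matrix n n ℂ) else 0

/-- Trace norm ‖M‖₁ = tr √(M Mᴴ). -/
def traceNorm (M : Matrix n n ℂ) : ℝ := ((msqrt (M * Mᴴ)).trace).re

/-- Trace distance (1/2)‖ρ − σ‖₁. -/
def traceDist (ρ σ : Matrix n n ℂ) : ℝ := traceNorm (ρ - σ) / 2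

/-- Uhlmann fidelity F(ρ,σ) = (tr √(√σ ρ √σ))². -/
def fidelity (ρ σ : Matrix n n ℂ) : ℝ :=
  (((msqrt (msqrt σ * ρ * msqrt σ)).trace).re) ^ 2

/-- Density operator: positive semidefinite with unit trace. -/
def IsDensity (ρ : Matrix n n ℂ) : Prop := ρ.PosSemidef ∧ ρ.trace = 1

/-- Rank-one operator |v⟩⟨v| associated with a vector. -/
def vecState {α : Type*} (v : α → ℂ) : Matrix α α ℂ :=
  Matrix.of fun i j => v i * (starRingEnd ℂ) (v j)

/-- Pure state: |v⟩⟨v| for some unit vector v. -/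
def IsPure {α : Type*} [Fintype α] (φ : Matrix α α ℂ) : Prop :=
  ∃ v : α → ℂ, (∑ i, Complex.normSq (v i)) = 1 ∧ φ = vecState v

/-- Set of separable states across the cut α : β. -/
def SepSet (α β : Type*) [Fintype α] [Fintype β] : Set (Matrix (α × β) (α × β) ℂ) :=
  convexHull ℝ {σ | ∃ φ ψ, IsPure φ ∧ IsPure ψ ∧ σ = φ ⊗ₖ ψ}

variable {α β : Type*} [Fintype α] [Fintype β] [DecidableEq α] [DecidableEq β]

/-- Extension Γ ⊗ id of a linear map on matrices by a k-dimensional ancilla. -/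
def lmapExt (Γ : Matrix α α ℂ →ₗ[ℂ] Matrix β β ℂ) (k : ℕ)
    (M : Matrix (α × Fin k) (α × Fin k) ℂ) : Matrix (β × Fin k) (β × Fin k) ℂ :=
  Matrix.of fun im jn => Γ (Matrix.of fun p q => M (p, im.2) (q, jn.2)) im.1 jn.1

/-- Completely positive trace-preserving linear map. -/
def IsCPTP (Γ : Matrix α α ℂ →ₗ[ℂ] Matrix β β ℂ) : Prop :=
  (∀ (k : ℕ) (M : Matrix (α × Fin k) (α × Fin k) ℂ), M.PosSemidef →
    (lmapExt Γ k M).PosSemidef) ∧ (∀ M, (Γ M).trace = M.trace)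

/-- Partial trace over the second tensor factor. -/
def ptrB (M : Matrix (α × β) (α × β) ℂ) : Matrix α α ℂ :=
  Matrix.of fun i j => ∑ m, M (i, m) (j, m)

/-- Partial trace over the first tensor factor. -/
def ptrA (M : Matrix (α × β) (α × β) ℂ) : Matrix β β ℂ :=
  Matrix.of fun i j => ∑ m, M (m, i) (m, j)

/-- Choi operator J(Λ) = Σ_{i,j} |i⟩⟨j| ⊗ Λ(|i⟩⟨j|). -/
def choi (Λ : Matrix α α ℂ →ₗ[ℂ] Matrix β β ℂ) : Matrix (α × β) (α × β) ℂ :=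
  Matrix.of fun p q => Λ (Matrix.single p.1 q.1 1) p.2 q.2

/-- Entanglement-breaking channel: all extended outputs are separable. -/
def IsEB (Λ : Matrix α α ℂ →ₗ[ℂ] Matrix β β ℂ) : Prop :=
  IsCPTP Λ ∧ ∀ (k : ℕ) (ρ : Matrix (α × Fin k) (α × Fin k) ℂ), IsDensity ρ →
    lmapExt Λ k ρ ∈ SepSet β (Fin k)

end

noncomputable section

/-- (ε,δ)-strong disentangler. -/
def IsStrongDisentangler (D d : ℕ) (ε δ : ℝ)
    (Λ : Matrix (Fin D) (Fin D) ℂ →ₗ[ℂ] Matrix (Fin d × Fin d) (Fin d × Fin d) ℂ) : Prop :=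
  IsCPTP Λ ∧
  (∀ (k : ℕ) (ρ : Matrix (Fin D × Fin k) (Fin D × Fin k) ℂ), IsDensity ρ →
    ∃ σ ∈ SepSet (Fin d) (Fin d × Fin k),
      traceDist ((Matrix.reindex (Equiv.prodAssoc (Fin d) (Fin d) (Fin k))
        (Equiv.prodAssoc (Fin d) (Fin d) (Fin k))) (lmapExt Λ k ρ)) σ ≤ ε) ∧
  (∀ σ ∈ SepSet (Fin d) (Fin d), ∃ ρ, IsDensity ρ ∧ traceDist (Λ ρ) σ ≤ δ)

open scoped MatrixOrder

/-
Both claims rest on the variational formula ‖X‖₁ = max {Re tr (W X) : -1 ≤ W ≤ 1} for Hermitian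
`X`: the bound comes from splitting `X = X⁺ - X⁻`, and `W = sign X` attains it. The map
`W ↦ W ⊗ 1` is adjoint to the partial trace and keeps `-1 ≤ W ≤ 1`, so tracing out the second
output system cannot increase trace distance; it sends a product state `φ ⊗ ψ` to `φ ⊗ tr₁ ψ`,
a mixture of pure product states, so separability survives. For (2) feed `ψ ⊗ ψ` into the
covering condition: the projection `A = ψ ⊗ 1` has `tr (A (ψ ⊗ ψ)) = 1`, and the variational
formula at `W = 1 - 2A` shows that `tr (A Λ(ρ)) = tr (ψ Γ(ρ))` is at least `1 - δ`.
-/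

section TraceNorm
variable {n : Type*} [Fintype n] [DecidableEq n]

lemma msqrt_eq_sqrt {M : Matrix n n ℂ} (hM : M.PosSemidef) : msqrt M = CFC.sqrt M := by
  rw [CFC.sqrt_eq_real_sqrt M hM.nonneg, cfcₙ_eq_cfc, hM.1.cfc_eq, IsHermitian.cfc,
    Unitary.conjStarAlgAut_apply, msqrt, dif_pos hM]
  rfl

lemma traceNorm_eq_re_trace_abs {X : Matrix n n ℂ} (hX : X.IsHermitian) :
    traceNorm X = (CFC.abs X).trace.re := by
  rw [traceNorm, msqrt_eq_sqrt (posSemidef_self_mul_conjTranspose X), CFC.abs, hX.eq,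
    (hX : IsSelfAdjoint X).star_eq]

lemma Matrix.PosSemidef.trace_mul_nonneg {P Q : Matrix n n ℂ} (hP : P.PosSemidef)
    (hQ : Q.PosSemidef) : 0 ≤ (P * Q).trace := by
  obtain ⟨B, rfl⟩ := CStarAlgebra.nonneg_iff_eq_star_mul_self.mp hQ.nonneg
  rw [← Matrix.mul_assoc, trace_mul_cycle, star_eq_conjTranspose]
  exact (hP.mul_mul_conjTranspose_same B).trace_nonneg

lemma re_trace_mul_le_of_le_one {W P : Matrix n n ℂ} (hW : W ≤ 1) (hP : 0 ≤ P) :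
    (W * P).trace.re ≤ P.trace.re := by
  have := (Complex.le_def.mp ((Matrix.le_iff.mp hW).trace_mul_nonneg hP.posSemidef)).1
  rw [Matrix.sub_mul, Matrix.one_mul, trace_sub, Complex.sub_re, Complex.zero_re] at this
  linarith

lemma re_trace_mul_le_traceNorm {W X : Matrix n n ℂ} (hX : X.IsHermitian) (hW₀ : -1 ≤ W)
    (hW₁ : W ≤ 1) : (W * X).trace.re ≤ traceNorm X := by
  have hX' : IsSelfAdjoint X := hX
  have hpos := re_trace_mul_le_of_le_one hW₁ (CFC.posPart_nonneg X)
  have hneg := re_trace_mul_le_of_le_one (neg_le.mp hW₀) (CFC.negPart_nonneg X)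
  rw [Matrix.neg_mul, trace_neg, Complex.neg_re] at hneg
  rw [traceNorm_eq_re_trace_abs hX, ← CFC.posPart_add_negPart X, trace_add, Complex.add_re]
  conv_lhs => rw [← CFC.posPart_sub_negPart X]
  rw [Matrix.mul_sub, trace_sub, Complex.sub_re]
  linarith

lemma exists_re_trace_mul_eq_traceNorm {X : Matrix n n ℂ} (hX : X.IsHermitian) :
    ∃ W, -1 ≤ W ∧ W ≤ 1 ∧ (W * X).trace.re = traceNorm X := by
  have hX' : IsSelfAdjoint X := hX
  have hcont : ∀ f : ℝ → ℝ, ContinuousOn f (spectrum ℝ X) := fun f =>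
    X.finite_real_spectrum.continuousOn f
  have hsign (t : ℝ) : -1 ≤ (SignType.sign t : ℝ) ∧ (SignType.sign t : ℝ) ≤ 1 := by
    cases SignType.sign t <;> norm_num
  refine ⟨cfc (fun t : ℝ => (SignType.sign t : ℝ)) X, ?_,
    cfc_le_one _ X fun t _ => (hsign t).2, ?_⟩
  · simpa using algebraMap_le_cfc _ (-1) X (fun t _ => (hsign t).1) (hcont _)
  · rw [traceNorm_eq_re_trace_abs hX, CFC.abs_eq_cfc_norm X]
    nth_rewrite 2 [← cfc_id' ℝ X]
    rw [← cfc_mul _ _ X (hcont _) (hcont _)]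
    simp only [sign_mul_self, Real.norm_eq_abs]

lemma re_trace_mul_le_add_traceDist {A ρ σ : Matrix n n ℂ} (hρ : ρ.IsHermitian)
    (hσ : σ.IsHermitian) (htr : ρ.trace = σ.trace) (hA₀ : 0 ≤ A) (hA₁ : A ≤ 1) :
    (A * σ).trace.re ≤ (A * ρ).trace.re + traceDist ρ σ := by
  have hW₀ : -1 ≤ 1 - (2 : ℝ) • A := by
    rw [Matrix.le_iff, sub_neg_eq_add, show 1 - (2 : ℝ) • A + 1 = (2 : ℝ) • (1 - A) by module]
    exact (Matrix.le_iff.mp hA₁).smul zero_le_two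
  have hW₁ : 1 - (2 : ℝ) • A ≤ 1 := by
    rw [Matrix.le_iff, sub_sub_cancel]
    exact hA₀.posSemidef.smul zero_le_two
  have key := re_trace_mul_le_traceNorm (hρ.sub hσ) hW₀ hW₁
  have htr' : (ρ - σ).trace = 0 := by rw [trace_sub, htr, sub_self]
  rw [Matrix.sub_mul, Matrix.one_mul, trace_sub, htr', Matrix.smul_mul, trace_smul,
    Matrix.mul_sub, trace_sub] at key
  rw [traceDist]
  simp only [zero_sub, Complex.neg_re, Complex.smul_re, Complex.sub_re, smul_eq_mul] at key
  linarith

end TraceNorm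

lemma vecState_eq_vecMulVec {ι : Type*} (v : ι → ℂ) : vecState v = vecMulVec v (star v) := rfl

section PureStates
variable {ι κ : Type*} [Fintype ι] [Fintype κ]

lemma star_dotProduct_self_eq_one {v : ι → ℂ} (hv : ∑ i, Complex.normSq (v i) = 1) :
    star v ⬝ᵥ v = 1 := by
  simp only [dotProduct, Pi.star_apply, RCLike.star_def, ← Complex.normSq_eq_conj_mul_self]
  exact_mod_cast hv

lemma IsPure.isStarProjection {φ : Matrix ι ι ℂ} (hφ : IsPure φ) : IsStarProjection φ := by
  obtain ⟨v, hv, rfl⟩ := hφ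
  refine ⟨?_, ?_⟩
  · rw [IsIdempotentElem, vecState_eq_vecMulVec, vecMulVec_mul_vecMulVec,
      star_dotProduct_self_eq_one hv, one_smul]
  · rw [IsSelfAdjoint, star_eq_conjTranspose, vecState_eq_vecMulVec, conjTranspose_vecMulVec,
      star_star]

lemma IsPure.trace_eq_one {φ : Matrix ι ι ℂ} (hφ : IsPure φ) : φ.trace = 1 := by
  obtain ⟨v, hv, rfl⟩ := hφ
  rw [vecState_eq_vecMulVec, trace_vecMulVec, dotProduct_comm, star_dotProduct_self_eq_one hv]

lemma IsStarProjection.kronecker {p : Matrix ι ι ℂ} {q : Matrix κ κ ℂ}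
    (hp : IsStarProjection p) (hq : IsStarProjection q) : IsStarProjection (p ⊗ₖ q) where
  isIdempotentElem := by rw [IsIdempotentElem, ← mul_kronecker_mul, hp.1.eq, hq.1.eq]
  isSelfAdjoint := by
    rw [IsSelfAdjoint, star_eq_conjTranspose, conjTranspose_kronecker, ← star_eq_conjTranspose,
      ← star_eq_conjTranspose, hp.2.star_eq, hq.2.star_eq]

lemma IsDensity.mem_convexHull_isPure [DecidableEq ι] {R : Matrix ι ι ℂ} (hR : IsDensity R) :
    R ∈ convexHull ℝ {φ | IsPure φ} := by
  set U := (hR.1.1.eigenvectorUnitary : Matrix ι ι ℂ)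
  have hdecomp : R = ∑ k, hR.1.1.eigenvalues k • vecState fun i => U i k := by
    conv_lhs => rw [hR.1.1.spectral_theorem]
    ext i j
    simp only [Complex.coe_algebraMap, Unitary.conjStarAlgAut_apply, mul_apply,
      IsHermitian.eigenvectorUnitary_apply, diagonal_apply, Function.comp_apply, mul_ite,
      mul_zero, Finset.sum_ite_eq', Finset.mem_univ, if_true, star_apply, RCLike.star_def,
      vecState, smul_of, Matrix.sum_apply, of_apply, Pi.smul_apply, Complex.real_smul, U]
    exact Finset.sum_congr rfl fun k _ => by ring
  have hsum : ∑ k, hR.1.1.eigenvalues k = 1 := by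
    have := hR.2
    rw [hR.1.1.trace_eq_sum_eigenvalues] at this
    simpa using congrArg Complex.re this
  have hunit (k : ι) : ∑ i, Complex.normSq (U i k) = 1 := by
    have := congr_fun₂ (Matrix.mem_unitaryGroup_iff'.mp hR.1.1.eigenvectorUnitary.2) k k
    simp only [mul_apply, star_apply, RCLike.star_def, one_apply_eq,
      ← Complex.normSq_eq_conj_mul_self] at this
    exact_mod_cast this
  rw [hdecomp]
  exact (convex_convexHull ℝ _).sum_mem (fun k _ => hR.1.eigenvalues_nonneg k) hsum
    fun k _ => subset_convexHull ℝ _ ⟨_, hunit k, rfl⟩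

end PureStates

lemma LinearMap.mem_convexHull_of_forall {E F : Type*} [AddCommGroup E] [Module ℝ E]
    [AddCommGroup F] [Module ℝ F] (f : E →ₗ[ℝ] F) {s : Set E} {t : Set F}
    (h : ∀ x ∈ s, f x ∈ convexHull ℝ t) {x : E} (hx : x ∈ convexHull ℝ s) :
    f x ∈ convexHull ℝ t := by
  have : f x ∈ convexHull ℝ (f '' s) := f.image_convexHull s ▸ Set.mem_image_of_mem f hx
  exact convexHull_min (Set.image_subset_iff.mpr h) (convex_convexHull ℝ t) this

section Separable
variable {α β : Type*} [Fintype α]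

lemma ptrA_vecState (w : α × β → ℂ) : ptrA (vecState w) = ∑ m, vecState fun i => w (m, i) := by
  ext i j
  simp [ptrA, vecState, Matrix.sum_apply]

variable [Fintype β]

lemma isHermitian_of_mem_sepSet {σ : Matrix (α × β) (α × β) ℂ} (hσ : σ ∈ SepSet α β) :
    σ.IsHermitian := by
  refine convexHull_min ?_ (selfAdjoint.submodule ℝ (Matrix (α × β) (α × β) ℂ)).convex hσ
  rintro _ ⟨φ, ψ, hφ, hψ, rfl⟩
  exact (hφ.isStarProjection.kronecker hψ.isStarProjection).2

lemma kronecker_mem_sepSet [DecidableEq β] {φ : Matrix α α ℂ} (hφ : IsPure φ)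
    {R : Matrix β β ℂ} (hR : IsDensity R) : φ ⊗ₖ R ∈ SepSet α β :=
  (kroneckerBilinear (R := ℝ) φ).mem_convexHull_of_forall
    (t := {σ | ∃ φ ψ, IsPure φ ∧ IsPure ψ ∧ σ = φ ⊗ₖ ψ})
    (fun ψ hψ => subset_convexHull ℝ _ ⟨φ, ψ, hφ, hψ, rfl⟩) hR.mem_convexHull_isPure

lemma trace_ptrA (M : Matrix (α × β) (α × β) ℂ) : (ptrA M).trace = M.trace := by
  simp only [Matrix.trace, Matrix.diag, ptrA, of_apply, Fintype.sum_prod_type]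
  exact Finset.sum_comm

lemma IsPure.isDensity_ptrA {ψ : Matrix (α × β) (α × β) ℂ} (hψ : IsPure ψ) :
    IsDensity (ptrA ψ) := by
  refine ⟨?_, by rw [trace_ptrA, hψ.trace_eq_one]⟩
  obtain ⟨w, -, rfl⟩ := hψ
  rw [ptrA_vecState]
  exact posSemidef_sum _ fun m _ => posSemidef_vecMulVec_self_star _

end Separable

section PartialTrace
variable {a b c : Type*}

def midToLast : a × (b × c) ≃ (a × c) × b :=
  (Equiv.prodCongr (Equiv.refl a) (Equiv.prodComm b c)).trans (Equiv.prodAssoc a c b).symm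

variable [Fintype b]

def ptrMid : Matrix (a × (b × c)) (a × (b × c)) ℂ →ₗ[ℂ] Matrix (a × c) (a × c) ℂ where
  toFun M := Matrix.of fun p q => ∑ m, M (p.1, (m, p.2)) (q.1, (m, q.2))
  map_add' M N := by ext; simp [Finset.sum_add_distrib]
  map_smul' r M := by ext; simp [Finset.mul_sum]

lemma ptrMid_eq_ptrB (M : Matrix (a × (b × c)) (a × (b × c)) ℂ) :
    ptrMid M = ptrB (M.submatrix midToLast.symm midToLast.symm) := rfl

lemma ptrMid_kronecker (φ : Matrix a a ℂ) (ψ : Matrix (b × c) (b × c) ℂ) :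
    ptrMid (φ ⊗ₖ ψ) = φ ⊗ₖ ptrA ψ := by
  ext p q
  simp [ptrMid, ptrA, Finset.mul_sum]

lemma ptrMid_isHermitian {M : Matrix (a × (b × c)) (a × (b × c)) ℂ} (hM : M.IsHermitian) :
    (ptrMid M).IsHermitian := by
  ext p q
  simp only [ptrMid, LinearMap.coe_mk, AddHom.coe_mk, conjTranspose_apply, of_apply, star_sum]
  exact Finset.sum_congr rfl fun m _ => hM.apply _ _

lemma ptrMid_mem_sepSet [Fintype a] [Fintype c] [DecidableEq c]
    {σ : Matrix (a × (b × c)) (a × (b × c)) ℂ} (hσ : σ ∈ SepSet a (b × c)) :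
    ptrMid σ ∈ SepSet a c := by
  refine (ptrMid.restrictScalars ℝ).mem_convexHull_of_forall ?_ hσ
  rintro _ ⟨φ, ψ, hφ, hψ, rfl⟩
  rw [LinearMap.restrictScalars_apply, ptrMid_kronecker]
  exact kronecker_mem_sepSet hφ hψ.isDensity_ptrA

variable [DecidableEq b]

lemma submatrix_kronecker_one_mono {ι κ : Type*} [Fintype κ] [DecidableEq κ] (e : ι ≃ κ × b)
    {W V : Matrix κ κ ℂ} (h : W ≤ V) :
    (W ⊗ₖ (1 : Matrix b b ℂ)).submatrix e e ≤ (V ⊗ₖ (1 : Matrix b b ℂ)).submatrix e e := by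
  rw [Matrix.le_iff]
  convert ((Matrix.le_iff.mp h).kronecker PosSemidef.one).submatrix e using 1
  ext
  simp [sub_mul]

lemma trace_kronecker_one_mul [Fintype a] [DecidableEq a] (S : Matrix a a ℂ)
    (T : Matrix (a × b) (a × b) ℂ) :
    ((S ⊗ₖ (1 : Matrix b b ℂ)) * T).trace = (S * ptrB T).trace := by
  simp only [Matrix.trace, Matrix.diag, mul_apply, kroneckerMap_apply, Matrix.one_apply, ptrB,
    of_apply, mul_ite, mul_one, mul_zero, ite_mul, zero_mul, Fintype.sum_prod_type,
    Finset.sum_ite_eq, Finset.mem_univ, if_true, Finset.mul_sum]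
  exact Finset.sum_congr rfl fun p _ => Finset.sum_comm

lemma trace_submatrix_equiv {ι κ : Type*} [Fintype ι] [Fintype κ] (A : Matrix κ κ ℂ)
    (e : ι ≃ κ) : (A.submatrix e e).trace = A.trace :=
  Equiv.sum_comp e A.diag

variable [Fintype a] [Fintype c] [DecidableEq a] [DecidableEq c]

lemma trace_mul_ptrMid (W : Matrix (a × c) (a × c) ℂ)
    (X : Matrix (a × (b × c)) (a × (b × c)) ℂ) :
    (W * ptrMid X).trace =
      ((W ⊗ₖ (1 : Matrix b b ℂ)).submatrix midToLast midToLast * X).trace := by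
  calc (W * ptrMid X).trace
      = ((W ⊗ₖ (1 : Matrix b b ℂ)) * X.submatrix midToLast.symm midToLast.symm).trace := by
        rw [ptrMid_eq_ptrB, trace_kronecker_one_mul]
    _ = (((W ⊗ₖ (1 : Matrix b b ℂ)) * X.submatrix midToLast.symm midToLast.symm).submatrix
          midToLast midToLast).trace := (trace_submatrix_equiv _ _).symm
    _ = _ := by rw [← submatrix_mul_equiv _ _ _ midToLast, submatrix_submatrix]; simp

lemma traceNorm_ptrMid_le {X : Matrix (a × (b × c)) (a × (b × c)) ℂ} (hX : X.IsHermitian) :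
    traceNorm (ptrMid X) ≤ traceNorm X := by
  obtain ⟨W, hW₀, hW₁, hW⟩ := exists_re_trace_mul_eq_traceNorm (ptrMid_isHermitian hX)
  have hone : ((1 : Matrix (a × c) (a × c) ℂ) ⊗ₖ (1 : Matrix b b ℂ)).submatrix
      midToLast midToLast = 1 := by
    rw [one_kronecker_one, submatrix_one_equiv]
  have hneg : (-1 : Matrix (a × c) (a × c) ℂ) ⊗ₖ (1 : Matrix b b ℂ) =
      -((1 : Matrix (a × c) (a × c) ℂ) ⊗ₖ (1 : Matrix b b ℂ)) := by
    ext; simp only [kroneckerMap_apply, Matrix.neg_apply, neg_mul]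
  have h₀ := submatrix_kronecker_one_mono (b := b) midToLast hW₀
  have h₁ := submatrix_kronecker_one_mono (b := b) midToLast hW₁
  rw [hneg, submatrix_neg, Pi.neg_apply, Pi.neg_apply, hone] at h₀
  rw [hone] at h₁
  rw [← hW, trace_mul_ptrMid]
  exact re_trace_mul_le_traceNorm hX h₀ h₁

lemma traceDist_ptrMid_le {ρ σ : Matrix (a × (b × c)) (a × (b × c)) ℂ}
    (hρ : ρ.IsHermitian) (hσ : σ.IsHermitian) :
    traceDist (ptrMid ρ) (ptrMid σ) ≤ traceDist ρ σ := by
  rw [traceDist, traceDist, ← map_sub]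
  exact div_le_div_of_nonneg_right (traceNorm_ptrMid_le (hρ.sub hσ)) zero_le_two

end PartialTrace

lemma IsCPTP.posSemidef_apply {α β : Type*} [Fintype α] [Fintype β] [DecidableEq α]
    [DecidableEq β] {Γ : Matrix α α ℂ →ₗ[ℂ] Matrix β β ℂ} (hΓ : IsCPTP Γ) {ρ : Matrix α α ℂ}
    (hρ : ρ.PosSemidef) : (Γ ρ).PosSemidef := by
  have h := hΓ.1 1 (ρ ⊗ₖ (1 : Matrix (Fin 1) (Fin 1) ℂ)) (hρ.kronecker PosSemidef.one)
  convert h.submatrix fun i => (i, 0)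
  ext i j
  simp only [lmapExt, kroneckerMap_apply, submatrix_apply, of_apply, one_apply_eq, mul_one]
  rfl

theorem strong_disentangler_induced_channel {D d : ℕ} {ε δ : ℝ}
    (Λ : Matrix (Fin D) (Fin D) ℂ →ₗ[ℂ] Matrix (Fin d × Fin d) (Fin d × Fin d) ℂ)
    (hΛ : IsStrongDisentangler D d ε δ Λ) :
    (∀ (k : ℕ) (ρ : Matrix (Fin D × Fin k) (Fin D × Fin k) ℂ), IsDensity ρ →
      ∃ σ ∈ SepSet (Fin d) (Fin k),
        traceDist (Matrix.of fun (p q : Fin d × Fin k) =>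
          ∑ m, (lmapExt Λ k ρ) ((p.1, m), p.2) ((q.1, m), q.2)) σ ≤ ε) ∧
      ∀ ψ : Matrix (Fin d) (Fin d) ℂ, IsPure ψ →
        ∃ ρ, IsDensity ρ ∧ 1 - δ ≤ ((ψ * ptrB (Λ ρ)).trace).re := by
  obtain ⟨hcptp, hsep, hcover⟩ := hΛ
  refine ⟨fun k ρ hρ => ?_, fun ψ hψ => ?_⟩
  · obtain ⟨σ, hσ, hdist⟩ := hsep k ρ hρ
    have hM := ((hcptp.1 k ρ hρ.1).submatrix (Equiv.prodAssoc (Fin d) (Fin d) (Fin k)).symm).1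
    exact ⟨ptrMid σ, ptrMid_mem_sepSet hσ,
      (traceDist_ptrMid_le hM (isHermitian_of_mem_sepSet hσ)).trans hdist⟩
  · have hψψ : ψ ⊗ₖ ψ ∈ SepSet (Fin d) (Fin d) := subset_convexHull ℝ _ ⟨ψ, ψ, hψ, hψ, rfl⟩
    obtain ⟨ρ, hρ, hdist⟩ := hcover _ hψψ
    have hA := hψ.isStarProjection.kronecker
      (IsStarProjection.one (R := Matrix (Fin d) (Fin d) ℂ))
    have htr : (Λ ρ).trace = (ψ ⊗ₖ ψ).trace := by
      rw [hcptp.2, hρ.2, trace_kronecker, hψ.trace_eq_one, one_mul]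
    have hAψψ : (ψ ⊗ₖ 1 * ψ ⊗ₖ ψ).trace = 1 := by
      rw [← mul_kronecker_mul, hψ.isStarProjection.1.eq, Matrix.one_mul, trace_kronecker,
        hψ.trace_eq_one, one_mul]
    have key := re_trace_mul_le_add_traceDist (hcptp.posSemidef_apply hρ.1).1
      (isHermitian_of_mem_sepSet hψψ) htr hA.nonneg hA.le_one
    rw [hAψψ, trace_kronecker_one_mul, Complex.one_re] at key
    exact ⟨ρ, hρ, by linarith⟩

end
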